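/- arXiv:1605.01028 — 8 statements merged into one kernel-verified Lean document; each statement's English description precedes it below -/
import Mathlib

section
/- The function g is differentiable on (0,∞) and satisfies g'(x) = g(x)²/(2(g(x) − 1)) for all x > 0; in particular g'(x) < 0 and equivalently g'(x)·(1/g(x) − 1/g(x)²) = 1/2 for all x > 0. -/
open Real Filter Topology Set

/-!
On `(0, 1]` the function `g` inverts the strictly decreasing map `y ↦ 2 (1/y + log y - 1)`,
whose derivative is `2 (y - 1) / y²`. So `g` is strictly decreasing on `(0, ∞)` with image
`(0, 1)`, an open set; a monotone map with open image is continuous, and the inverse function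
theorem then gives `g' = g² / (2 (g - 1))`.
-/

noncomputable def gInverse (y : ℝ) : ℝ := 2 * (y⁻¹ + log y - 1)

lemma hasDerivAt_gInverse {y : ℝ} (hy : y ≠ 0) :
    HasDerivAt gInverse (2 * (y - 1) / y ^ 2) y := by
  have h := (((hasDerivAt_inv hy).add (hasDerivAt_log hy)).sub_const 1).const_mul 2
  exact h.congr_deriv (by field_simp; ring)

lemma gInverse_one : gInverse 1 = 0 := by
  simp [gInverse]

lemma strictAntiOn_gInverse : StrictAntiOn gInverse (Ioc 0 1) := by
  refine strictAntiOn_of_hasDerivWithinAt_neg (convex_Ioc 0 1)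
    (fun y hy ↦ (hasDerivAt_gInverse hy.1.ne').continuousAt.continuousWithinAt)
    (fun y hy ↦ (hasDerivAt_gInverse (interior_subset hy).1.ne').hasDerivWithinAt) ?_
  rw [interior_Ioc]
  intro y ⟨hy₀, hy₁⟩
  exact div_neg_of_neg_of_pos (by linarith) (by positivity)

lemma StrictAntiOn.strictAntiOn_of_leftInvOn {α β : Type*} [Preorder α] [LinearOrder β]
    {f : β → α} {g : α → β} {s : Set β} {t : Set α} (hf : StrictAntiOn f s) (hg : MapsTo g t s)
    (hfg : LeftInvOn f g t) : StrictAntiOn g t := by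
  intro a ha b hb hab
  rw [← hf.lt_iff_gt (hg ha) (hg hb), hfg ha, hfg hb]
  exact hab

section

variable {g : ℝ → ℝ}

lemma mapsTo_Ioo_of_leftInvOn_gInverse (hmaps : MapsTo g (Ioi 0) (Ioc 0 1))
    (hinv : LeftInvOn gInverse g (Ioi 0)) : MapsTo g (Ioi 0) (Ioo 0 1) := by
  intro x hx
  refine ⟨(hmaps hx).1, (hmaps hx).2.lt_of_ne fun h ↦ ?_⟩
  have := hinv hx
  rw [h, gInverse_one] at this
  exact hx.ne this

lemma surjOn_Ioo_of_leftInvOn_gInverse (hmaps : MapsTo g (Ioi 0) (Ioc 0 1))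
    (hinv : LeftInvOn gInverse g (Ioi 0)) : SurjOn g (Ioi 0) (Ioo 0 1) := by
  intro y ⟨hy₀, hy₁⟩
  have hy : y ∈ Ioc (0 : ℝ) 1 := ⟨hy₀, hy₁.le⟩
  have hpos : 0 < gInverse y := by
    rw [← gInverse_one]
    exact strictAntiOn_gInverse hy ⟨one_pos, le_rfl⟩ hy₁
  exact ⟨gInverse y, hpos, strictAntiOn_gInverse.injOn (hmaps hpos) hy (hinv hpos)⟩

lemma continuousAt_of_leftInvOn_gInverse (hmaps : MapsTo g (Ioi 0) (Ioc 0 1))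
    (hinv : LeftInvOn gInverse g (Ioi 0)) {x : ℝ} (hx : 0 < x) : ContinuousAt g x := by
  have hanti : StrictAntiOn g (Ioi 0) :=
    strictAntiOn_gInverse.strictAntiOn_of_leftInvOn hmaps hinv
  have himage : g '' Ioi 0 ∈ 𝓝 (g x) :=
    mem_of_superset (Ioo_mem_nhds (mapsTo_Ioo_of_leftInvOn_gInverse hmaps hinv hx).1
      (mapsTo_Ioo_of_leftInvOn_gInverse hmaps hinv hx).2)
      (surjOn_Ioo_of_leftInvOn_gInverse hmaps hinv)
  exact hanti.dual_right.continuousAt_of_image_mem_nhds (Ioi_mem_nhds hx) himage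

lemma hasDerivAt_of_leftInvOn_gInverse (hmaps : MapsTo g (Ioi 0) (Ioc 0 1))
    (hinv : LeftInvOn gInverse g (Ioi 0)) {x : ℝ} (hx : 0 < x) :
    HasDerivAt g (g x ^ 2 / (2 * (g x - 1))) x := by
  obtain ⟨hgx₀, hgx₁⟩ := mapsTo_Ioo_of_leftInvOn_gInverse hmaps hinv hx
  have hderiv_ne : 2 * (g x - 1) / g x ^ 2 ≠ 0 :=
    div_ne_zero (by linarith) (by positivity)
  have h := (hasDerivAt_gInverse hgx₀.ne').of_local_left_inverse
    (continuousAt_of_leftInvOn_gInverse hmaps hinv hx) hderiv_ne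
    (eventually_of_mem (Ioi_mem_nhds hx) hinv)
  rwa [inv_div] at h

end

/-- The implicitly defined `g` is differentiable on `(0,∞)` with
`g'(x) = g(x)² / (2(g(x) − 1))`; in particular `g'(x) < 0` and
`g'(x) · (1/g(x) − 1/g(x)²) = 1/2` for all `x > 0`. -/
theorem stmt_2 (g : ℝ → ℝ)
    (hg : ∀ x : ℝ, 0 ≤ x →
      g x ∈ Set.Ioc (0 : ℝ) 1 ∧ 1 / g x + Real.log (g x) = 1 + x / 2) :
    ∀ x : ℝ, 0 < x →
      HasDerivAt g ((g x) ^ 2 / (2 * (g x - 1))) x ∧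
      deriv g x < 0 ∧
      deriv g x * (1 / g x - 1 / (g x) ^ 2) = 1 / 2 := by
  have hmaps : MapsTo g (Ioi 0) (Ioc 0 1) := fun x hx ↦ (hg x (le_of_lt hx)).1
  have hinv : LeftInvOn gInverse g (Ioi 0) := fun x hx ↦ by
    rw [gInverse, ← one_div, (hg x (le_of_lt hx)).2]
    ring
  intro x hx
  obtain ⟨hgx₀, hgx₁⟩ := mapsTo_Ioo_of_leftInvOn_gInverse hmaps hinv hx
  have hderiv := hasDerivAt_of_leftInvOn_gInverse hmaps hinv hx
  refine ⟨hderiv, ?_, ?_⟩ <;> rw [hderiv.deriv]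
  · exact div_neg_of_pos_of_neg (by positivity) (by linarith)
  · have : g x - 1 ≠ 0 := by linarith
    field_simp
end

section
/- As x → 0+, one has (1 − g(x))/√x → 1; that is, g(x) = 1 − √x + o(√x) near x = 0. -/
/-!
Write `y = g x`, so that `y⁻¹ + log y - 1 = x / 2`. On `(0, 1]` the left side lies between
`(1 - y)² / 2` and `(y⁻¹ - 1)² / 2`, hence `1 - y ≤ √x ≤ (1 - y) / y`, i.e.
`y ≤ (1 - y) / √x ≤ 1`. Since `1 - √x ≤ y`, the quotient is squeezed between `1 - √x` and `1`.
-/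

open Real Filter Set

lemma nonneg_of_hasDerivAt_nonpos_of_right_eq_zero {f f' : ℝ → ℝ} {a b : ℝ}
    (hf : ∀ y ∈ Ioc a b, HasDerivAt f (f' y) y) (hf' : ∀ y ∈ Ioo a b, f' y ≤ 0)
    (hb : f b = 0) {y : ℝ} (hy : y ∈ Ioc a b) : 0 ≤ f y := by
  have hanti : AntitoneOn f (Ioc a b) := by
    refine antitoneOn_of_hasDerivWithinAt_nonpos (f' := f') (convex_Ioc a b)
      (fun z hz ↦ (hf z hz).continuousAt.continuousWithinAt) ?_ ?_ <;> rw [interior_Ioc]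
    · exact fun z hz ↦ (hf z (Ioo_subset_Ioc_self hz)).hasDerivWithinAt
    · exact hf'
  exact hb ▸ hanti hy (right_mem_Ioc.2 (hy.1.trans_le hy.2)) hy.2

lemma hasDerivAt_inv_add_log {y : ℝ} (hy : 0 < y) :
    HasDerivAt (fun z ↦ z⁻¹ + log z) (-(y ^ 2)⁻¹ + y⁻¹) y :=
  (hasDerivAt_inv hy.ne').add (hasDerivAt_log hy.ne')

lemma sq_one_sub_div_two_le_inv_add_log_sub_one {y : ℝ} (hy : y ∈ Ioc 0 1) :
    (1 - y) ^ 2 / 2 ≤ y⁻¹ + log y - 1 := by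
  have key := nonneg_of_hasDerivAt_nonpos_of_right_eq_zero
    (f := fun z ↦ z⁻¹ + log z - 1 - (1 - z) ^ 2 / 2)
    (f' := fun z ↦ -((1 - z) ^ 2 * (1 + z)) / z ^ 2)
    (fun z hz ↦ (((hasDerivAt_inv_add_log hz.1).sub_const 1).sub
      ((((hasDerivAt_id' z).const_sub 1).fun_pow 2).div_const 2)).congr_deriv <| by
      field_simp [hz.1.ne']
      ring)
    (fun z hz ↦ div_nonpos_of_nonpos_of_nonneg
      (by nlinarith [sq_nonneg (1 - z), hz.1]) (sq_nonneg z))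
    (by simp) hy
  linarith

lemma inv_add_log_sub_one_le_sq_inv_sub_one_div_two {y : ℝ} (hy : y ∈ Ioc 0 1) :
    y⁻¹ + log y - 1 ≤ (y⁻¹ - 1) ^ 2 / 2 := by
  have key := nonneg_of_hasDerivAt_nonpos_of_right_eq_zero
    (f := fun z ↦ (z⁻¹ - 1) ^ 2 / 2 - (z⁻¹ + log z - 1))
    (f' := fun z ↦ -(1 - z) ^ 2 / z ^ 3)
    (fun z hz ↦ (((((hasDerivAt_inv hz.1.ne').sub_const 1).fun_pow 2).div_const 2).sub
      ((hasDerivAt_inv_add_log hz.1).sub_const 1)).congr_deriv <| by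
      norm_num
      field_simp [hz.1.ne']
      ring)
    (fun z hz ↦ div_nonpos_of_nonpos_of_nonneg
      (neg_nonpos.2 (sq_nonneg _)) (pow_nonneg hz.1.le 3))
    (by simp) hy
  linarith

lemma one_sub_div_sqrt_mem_Icc {x y : ℝ} (hx : 0 < x) (hy : y ∈ Ioc 0 1)
    (h : y⁻¹ + log y - 1 = x / 2) : (1 - y) / √x ∈ Icc (1 - √x) 1 := by
  have hs : 0 < √x := sqrt_pos.2 hx
  have h₁ : 1 - y ≤ √x :=
    le_sqrt_of_sq_le (by linarith [sq_one_sub_div_two_le_inv_add_log_sub_one hy])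
  have h₂ : √x ≤ y⁻¹ - 1 := (sqrt_le_left (sub_nonneg.2 (one_le_inv₀ hy.1 |>.2 hy.2))).2
    (by linarith [inv_add_log_sub_one_le_sq_inv_sub_one_div_two hy])
  have h₃ : y * √x ≤ 1 - y := by
    calc y * √x ≤ y * (y⁻¹ - 1) := mul_le_mul_of_nonneg_left h₂ hy.1.le
      _ = 1 - y := by field_simp [hy.1.ne']
  refine ⟨?_, (div_le_one hs).2 h₁⟩
  calc 1 - √x ≤ y := by linarith
    _ ≤ (1 - y) / √x := (le_div_iff₀ hs).2 h₃

/-- As `x → 0⁺`, `(1 − g(x))/√x → 1`, i.e. `g(x) = 1 − √x + o(√x)` near `0`. -/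
theorem stmt_4 (g : ℝ → ℝ)
    (hg : ∀ x : ℝ, 0 ≤ x →
      g x ∈ Set.Ioc (0 : ℝ) 1 ∧ 1 / g x + Real.log (g x) = 1 + x / 2) :
    Tendsto (fun x : ℝ => (1 - g x) / Real.sqrt x) (nhdsWithin 0 (Set.Ioi 0)) (nhds 1) := by
  have hbounds : ∀ᶠ x in nhdsWithin 0 (Ioi 0), (1 - g x) / √x ∈ Icc (1 - √x) 1 := by
    filter_upwards [self_mem_nhdsWithin] with x hx
    obtain ⟨hmem, heq⟩ := hg x (le_of_lt hx)
    exact one_sub_div_sqrt_mem_Icc hx hmem (by rw [one_div] at heq; linarith)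
  have hlower : Tendsto (fun x ↦ 1 - √x) (nhdsWithin 0 (Ioi 0)) (nhds 1) := by
    have hcont : Continuous fun x : ℝ ↦ 1 - √x := by fun_prop
    exact (hcont.tendsto' 0 1 (by simp)).mono_left nhdsWithin_le_nhds
  exact tendsto_of_tendsto_of_tendsto_of_le_of_le' hlower tendsto_const_nhds
    (hbounds.mono fun _ h ↦ h.1) (hbounds.mono fun _ h ↦ h.2)
end

section
/- Define f₀(x) = 2(1/g(x) − 1) for x ≥ 0. Then f₀(0) = 0 and f₀(x)/√x → 2 as x → 0+; that is, f₀(x) ∼ 2√x near x = 0. -/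
/-!
Put `u = 1/g(x) - 1 ≥ 0`; the defining equation becomes `u - log (1 + u) = x/2`. The elementary
bounds `u²/(2(1+u)) ≤ u - log (1 + u) ≤ u²/2` (from `t ≤ sinh t` at `t = log (1 + u)`, and from
`2u/(u+2) ≤ log (1 + u)`) give `x ≤ u² ≤ x(1+u)`, hence `√x ≤ u ≤ √x + x`. So `f₀(x)/√x = 2u/√x`
lies between `2` and `2 + 2√x`.
-/

open Real Filter Topology

lemma sq_div_two_mul_one_add_le_sub_log_one_add {u : ℝ} (hu : 0 ≤ u) :
    u ^ 2 / (2 * (1 + u)) ≤ u - log (1 + u) := by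
  have hpos : 0 < 1 + u := by linarith
  have hsinh : log (1 + u) ≤ ((1 + u) - (1 + u)⁻¹) / 2 := by
    rw [← sinh_log hpos]
    exact self_le_sinh_iff.mpr (log_nonneg (by linarith))
  have hid : u - ((1 + u) - (1 + u)⁻¹) / 2 = u ^ 2 / (2 * (1 + u)) := by
    field_simp
    ring
  linarith

lemma sub_log_one_add_le_sq_div_two {u : ℝ} (hu : 0 ≤ u) : u - log (1 + u) ≤ u ^ 2 / 2 := by
  have hid : u - 2 * u / (u + 2) = u ^ 2 / (u + 2) := by
    field_simp
    ring
  have hle : u ^ 2 / (u + 2) ≤ u ^ 2 / 2 :=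
    div_le_div_of_nonneg_left (sq_nonneg u) two_pos (by linarith)
  linarith [le_log_one_add_of_nonneg hu]

lemma sqrt_le_and_le_sqrt_add_of_sub_log_one_add_eq {u x : ℝ} (hu : 0 ≤ u) (hx : 0 ≤ x)
    (h : u - log (1 + u) = x / 2) : √x ≤ u ∧ u ≤ √x + x := by
  have hupper : x ≤ u ^ 2 := by linarith [sub_log_one_add_le_sq_div_two hu]
  have hlower : u ^ 2 ≤ x * (1 + u) := by
    have := sq_div_two_mul_one_add_le_sub_log_one_add hu
    rw [h, div_le_div_iff₀ (by positivity) two_pos] at this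
    linarith
  have hsqrt : √x ≤ u := by simpa [sqrt_sq hu] using sqrt_le_sqrt hupper
  refine ⟨hsqrt, ?_⟩
  have hs := sq_sqrt hx
  -- if `u > √x + x`, then `u² > u√x + ux ≥ x + xu`
  nlinarith [sqrt_nonneg x, mul_le_mul_of_nonneg_left hsqrt hu]

lemma tendsto_div_sqrt_nhdsGT_zero {u : ℝ → ℝ}
    (h : ∀ᶠ x in 𝓝[>] 0, √x ≤ u x ∧ u x ≤ √x + x) :
    Tendsto (fun x => u x / √x) (𝓝[>] 0) (𝓝 1) := by
  have hlim : Tendsto (fun x : ℝ => 1 + √x) (𝓝[>] 0) (𝓝 1) := by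
    have : Tendsto (fun x : ℝ => 1 + √x) (𝓝 0) (𝓝 (1 + √0)) :=
      (continuous_const.add continuous_sqrt).tendsto 0
    simpa using this.mono_left nhdsWithin_le_nhds
  refine tendsto_of_tendsto_of_tendsto_of_le_of_le' tendsto_const_nhds hlim ?_ ?_
  all_goals
    filter_upwards [h, self_mem_nhdsWithin] with x ⟨hlo, hhi⟩ (hx : 0 < x)
    have hs : 0 < √x := sqrt_pos.mpr hx
  · rwa [le_div_iff₀ hs, one_mul]
  · rw [div_le_iff₀ hs, add_mul, one_mul, mul_self_sqrt hx.le]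
    linarith

lemma sub_log_one_add_inv_sub_one_eq {y x : ℝ} (h : 1 / y + log y = 1 + x / 2) :
    (1 / y - 1) - log (1 + (1 / y - 1)) = x / 2 := by
  rw [add_sub_cancel, one_div, log_inv]
  rw [one_div] at h
  linarith

/-- With `f₀(x) = 2(1/g(x) − 1)`, one has `f₀(0) = 0` and `f₀(x)/√x → 2` as `x → 0⁺`,
i.e. `f₀(x) ∼ 2√x` near `0`. -/
theorem stmt_5 (g : ℝ → ℝ)
    (hg : ∀ x : ℝ, 0 ≤ x →
      g x ∈ Set.Ioc (0 : ℝ) 1 ∧ 1 / g x + Real.log (g x) = 1 + x / 2)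
    (f₀ : ℝ → ℝ) (hf₀ : ∀ x : ℝ, f₀ x = 2 * (1 / g x - 1)) :
    f₀ 0 = 0 ∧
    Tendsto (fun x : ℝ => f₀ x / Real.sqrt x) (nhdsWithin 0 (Set.Ioi 0)) (nhds 2) := by
  have hbounds : ∀ x, 0 ≤ x → √x ≤ 1 / g x - 1 ∧ 1 / g x - 1 ≤ √x + x := by
    intro x hx
    obtain ⟨⟨hpos, hle⟩, heq⟩ := hg x hx
    have hu : 0 ≤ 1 / g x - 1 := by
      rw [sub_nonneg, le_div_iff₀ hpos, one_mul]
      exact hle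
    exact sqrt_le_and_le_sqrt_add_of_sub_log_one_add_eq hu hx
      (sub_log_one_add_inv_sub_one_eq heq)
  constructor
  · obtain ⟨hlo, hhi⟩ := hbounds 0 le_rfl
    simp only [sqrt_zero, add_zero] at hlo hhi
    rw [hf₀, le_antisymm hhi hlo, mul_zero]
  · have hratio := (tendsto_div_sqrt_nhdsGT_zero (u := fun x => 1 / g x - 1)
      (eventually_mem_nhdsWithin.mono fun x hx => hbounds x (le_of_lt hx))).const_mul 2
    rw [mul_one] at hratio
    refine hratio.congr fun x => ?_
    rw [hf₀, mul_div_assoc]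
end

section
/- For each real b ≥ 1 there is a unique a(b) ∈ [1,∞) with a(b) − log(a(b)) = b, and a(b) − b − log b → 0 as b → ∞. Consequently, 1/g(x) − (1 + x/2) − log(1 + x/2) → 0 as x → ∞, i.e. g(x) ≈ 1/(1 + x/2 + log(1 + x/2)) for large x. -/
/-!
The map `a ↦ a - log a` is continuous and strictly increasing on `[1, ∞)`, and `log a ≤ a / 2`
puts the solution of `a - log a = b` in `[1, 2b]`, so it exists and is unique. For the asymptotics,
`a - b - log b = log (a / b) ≤ a / b - 1 = log a / b ≤ log (2b) / b → 0`, while `a ≥ b` makes the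
left side nonnegative. The statement about `g` is the case `a = 1 / g`, `b = 1 + x / 2`.
-/

open Real Filter

lemma log_le_half_self {t : ℝ} (ht : 0 < t) : log t ≤ t / 2 := by
  have h := log_le_sub_one_of_pos (half_pos ht)
  rw [log_div ht.ne' two_ne_zero] at h
  linarith [log_two_lt_d9]

lemma strictMonoOn_sub_log : StrictMonoOn (fun a : ℝ => a - log a) (Set.Ici 1) := by
  intro x (hx : 1 ≤ x) y (hy : 1 ≤ y) hxy
  have hx0 : 0 < x := by linarith
  have hlog : log (y / x) < y / x - 1 :=
    log_lt_sub_one_of_pos (by positivity) (by rw [Ne, div_eq_one_iff_eq hx0.ne']; exact hxy.ne')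
  have hdiv : y / x - 1 ≤ y - x := by
    rw [div_sub_one hx0.ne', div_le_iff₀ hx0]
    nlinarith
  rw [log_div (by linarith) hx0.ne'] at hlog
  show x - log x < y - log y
  linarith

lemma existsUnique_sub_log_eq {b : ℝ} (hb : 1 ≤ b) :
    ∃! a : ℝ, a ∈ Set.Ici (1 : ℝ) ∧ a - log a = b := by
  have hcont : ContinuousOn (fun a : ℝ => a - log a) (Set.Icc 1 (2 * b)) :=
    continuousOn_id.sub <| continuousOn_log.mono fun x hx => by
      simp only [Set.mem_compl_iff, Set.mem_singleton_iff]; linarith [hx.1]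
  have hmem : b ∈ Set.Icc (1 - log 1) (2 * b - log (2 * b)) := by
    constructor
    · simpa using hb
    · linarith [log_le_half_self (by linarith : 0 < 2 * b)]
  obtain ⟨a, ha, hab⟩ := intermediate_value_Icc (by linarith) hcont hmem
  refine ⟨a, ⟨ha.1, hab⟩, fun c ⟨hc, hcb⟩ => strictMonoOn_sub_log.injOn hc ha.1 ?_⟩
  exact hcb.trans hab.symm

lemma sub_sub_log_mem_Icc_of_sub_log_eq {a b : ℝ} (ha : 1 ≤ a) (hab : a - log a = b) :
    a - b - log b ∈ Set.Icc 0 (log (2 * b) / b) := by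
  have hb : 1 ≤ b := by linarith [log_le_sub_one_of_pos (by linarith : 0 < a)]
  have hb0 : 0 < b := by linarith
  have hba : b ≤ a := by linarith [log_nonneg ha]
  have ha2b : a ≤ 2 * b := by linarith [log_le_half_self (by linarith : 0 < a)]
  have hdiff : a - b - log b = log (a / b) := by
    rw [log_div (by linarith) hb0.ne']; linarith
  rw [hdiff]
  refine ⟨log_nonneg ((one_le_div hb0).2 hba), ?_⟩
  calc log (a / b) ≤ a / b - 1 := log_le_sub_one_of_pos (by positivity)
    _ = log a / b := by rw [div_sub_one hb0.ne']; congr 1; linarith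
    _ ≤ log (2 * b) / b := by gcongr

lemma tendsto_log_two_mul_div_atTop : Tendsto (fun b : ℝ => log (2 * b) / b) atTop (nhds 0) := by
  have h : Tendsto (fun b : ℝ => log (2 * b) / (2 * b)) atTop (nhds 0) :=
    isLittleO_log_id_atTop.tendsto_div_nhds_zero.comp (tendsto_id.const_mul_atTop two_pos)
  have h2 := h.const_mul 2
  rw [mul_zero] at h2
  refine h2.congr' ?_
  filter_upwards [eventually_ne_atTop 0] with b hb
  field_simp

lemma tendsto_sub_sub_log_of_sub_log_eq (a : ℝ → ℝ)
    (ha : ∀ b : ℝ, 1 ≤ b → a b ∈ Set.Ici (1 : ℝ) ∧ a b - log (a b) = b) :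
    Tendsto (fun b : ℝ => a b - b - log b) atTop (nhds 0) := by
  have hbounds : ∀ᶠ b in atTop, a b - b - log b ∈ Set.Icc 0 (log (2 * b) / b) := by
    filter_upwards [eventually_ge_atTop 1] with b hb
    exact sub_sub_log_mem_Icc_of_sub_log_eq (ha b hb).1 (ha b hb).2
  exact tendsto_of_tendsto_of_tendsto_of_le_of_le' tendsto_const_nhds
    tendsto_log_two_mul_div_atTop (hbounds.mono fun _ h => h.1) (hbounds.mono fun _ h => h.2)

/-- For each `b ≥ 1` there is a unique `a(b) ∈ [1,∞)` with `a(b) − log (a b) = b`, and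
`a(b) − b − log b → 0` as `b → ∞`. Consequently
`1/g(x) − (1 + x/2) − log (1 + x/2) → 0` as `x → ∞`. -/
theorem stmt_6 (g : ℝ → ℝ)
    (hg : ∀ x : ℝ, 0 ≤ x →
      g x ∈ Set.Ioc (0 : ℝ) 1 ∧ 1 / g x + Real.log (g x) = 1 + x / 2) :
    (∀ b : ℝ, 1 ≤ b → ∃! a : ℝ, a ∈ Set.Ici (1 : ℝ) ∧ a - Real.log a = b) ∧
    (∀ a : ℝ → ℝ,
      (∀ b : ℝ, 1 ≤ b → a b ∈ Set.Ici (1 : ℝ) ∧ a b - Real.log (a b) = b) →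
      Tendsto (fun b : ℝ => a b - b - Real.log b) atTop (nhds 0)) ∧
    Tendsto (fun x : ℝ => 1 / g x - (1 + x / 2) - Real.log (1 + x / 2)) atTop (nhds 0) := by
  refine ⟨fun b => existsUnique_sub_log_eq, tendsto_sub_sub_log_of_sub_log_eq, ?_⟩
  have hspec : ∀ b : ℝ, 1 ≤ b →
      1 / g (2 * (b - 1)) ∈ Set.Ici (1 : ℝ) ∧ 1 / g (2 * (b - 1)) - log (1 / g (2 * (b - 1))) = b := by
    intro b hb
    obtain ⟨⟨hg0, hg1⟩, hgeq⟩ := hg (2 * (b - 1)) (by linarith)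
    refine ⟨one_le_one_div hg0 hg1, ?_⟩
    rw [one_div, log_inv]
    rw [one_div] at hgeq
    linarith
  have hx : Tendsto (fun x : ℝ => 1 + x / 2) atTop atTop :=
    tendsto_atTop_add_const_left _ 1 (tendsto_id.atTop_div_const two_pos)
  refine ((tendsto_sub_sub_log_of_sub_log_eq _ hspec).comp hx).congr fun x => ?_
  simp only [Function.comp_apply]
  ring_nf
end

section
/- With f₀(x) = 2(1/g(x) − 1), one has f₀(x) − x − 2·log(1 + x/2) → 0 as x → ∞. -/
/-!
Put `y = g x` and `u = 1 + x/2`. The defining equation gives `f₀ x = x - 2 log y` and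
`y u = 1 + y log y`, so `f₀ x - x - 2 log u = -2 log (1 + y log y)`. Since `log y ≤ 0`, also
`1/y ≥ u → ∞`, hence `y → 0` and `y log y → 0`.
-/

open Real Filter Topology

lemma tendsto_zero_of_inv_add_log_tendsto_atTop {α : Type*} {l : Filter α} {y : α → ℝ}
    (hy : ∀ᶠ a in l, y a ∈ Set.Ioc 0 1)
    (h : Tendsto (fun a => 1 / y a + log (y a)) l atTop) : Tendsto y l (𝓝 0) := by
  have hinv : Tendsto (fun a => (y a)⁻¹) l atTop := by
    refine tendsto_atTop_mono' l ?_ h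
    filter_upwards [hy] with a ⟨hpos, hle⟩
    simpa using log_nonpos hpos.le hle
  exact hinv.inv_tendsto_atTop.congr fun a => inv_inv (y a)

lemma two_mul_inv_sub_one_sub_eq_neg_two_mul_log {x y : ℝ} (hx : 0 ≤ x) (hy : 0 < y)
    (h : 1 / y + log y = 1 + x / 2) :
    2 * (1 / y - 1) - x - 2 * log (1 + x / 2) = -2 * log (1 + y * log y) := by
  have hprod : y * (1 + x / 2) = 1 + y * log y := by
    rw [← h, mul_add, mul_one_div_cancel hy.ne']
  have hlog : log y + log (1 + x / 2) = log (1 + y * log y) := by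
    rw [← log_mul hy.ne' (by positivity), hprod]
  linear_combination 2 * h - 2 * hlog

/-- With `f₀(x) = 2(1/g(x) − 1)`, one has `f₀(x) − x − 2 log(1 + x/2) → 0` as `x → ∞`. -/
theorem stmt_7 (g : ℝ → ℝ)
    (hg : ∀ x : ℝ, 0 ≤ x →
      g x ∈ Set.Ioc (0 : ℝ) 1 ∧ 1 / g x + Real.log (g x) = 1 + x / 2)
    (f₀ : ℝ → ℝ) (hf₀ : ∀ x : ℝ, f₀ x = 2 * (1 / g x - 1)) :
    Tendsto (fun x : ℝ => f₀ x - x - 2 * Real.log (1 + x / 2)) atTop (nhds 0) := by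
  have hx_nonneg := eventually_ge_atTop (0 : ℝ)
  have hg_zero : Tendsto g atTop (𝓝 0) := by
    refine tendsto_zero_of_inv_add_log_tendsto_atTop
      (hx_nonneg.mono fun x hx => (hg x hx).1) ?_
    refine (tendsto_atTop_add_const_left _ 1
      (tendsto_id.atTop_div_const two_pos)).congr' ?_
    filter_upwards [hx_nonneg] with x hx using ((hg x hx).2).symm
  have hlim : Tendsto (fun x => -2 * log (1 + g x * log (g x))) atTop (𝓝 0) := by
    have hmul := (continuous_mul_log.tendsto 0).comp hg_zero
    simpa using (((hmul.const_add 1).log (by simp)).const_mul (-2 : ℝ))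
  refine hlim.congr' ?_
  filter_upwards [hx_nonneg] with x hx
  rw [hf₀, two_mul_inv_sub_one_sub_eq_neg_two_mul_log hx (hg x hx).1.1 (hg x hx).2]
end

section
/- Fix M > 0, α ∈ (0, 1/2), c > 0, and ε ∈ (0, M). Set λ = 2(1+c)/c^{2α}, A' = c^{2α+1}·e^{λε}/(2(1+c)²), and D = ε + (M−ε)/(1+c) + A'(e^{−λε} − e^{−λM}). Define g on [0, M] by g(x) = D − x for 0 ≤ x ≤ ε, and g(x) = (M−x)/(1+c) + A'(e^{−λx} − e^{−λM}) for ε ≤ x ≤ M. Then g is continuously differentiable on [0, M] (the two pieces and their first derivatives agree at x = ε), g(M) = 0, g'(x) + 1 = 0 for x ∈ (0, ε), and (1+c)·g'(x) + (c^{2α}/2)·g''(x) + 1 = 0 for x ∈ (ε, M). -/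
open Real Filter Set

/-!
Both pieces are explicit, so everything is a computation. With `s = c^(2α)` and
`λ = 2(1+c)/s`, the exponential solves the homogeneous equation `(1+c) h' + (s/2) h'' = 0`,
hence `(M - x)/(1+c) + A' (e^(-λx) - e^(-λM))` solves the inhomogeneous one for every `A'`.
The constant `D` makes the two pieces agree at `ε`, and `A'` is chosen so that the outer
slope at `ε` equals `-1`, the slope of `D - x`; a function glued from two `C¹` pieces
with matching values and slopes is `C¹`.
-/

section Gluing

variable {f₁ f₂ f₁' f₂' : ℝ → ℝ} {a : ℝ}

theorem hasDerivAt_ite_le (h₁ : ∀ x, HasDerivAt f₁ (f₁' x) x)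
    (h₂ : ∀ x, HasDerivAt f₂ (f₂' x) x) (hfa : f₁ a = f₂ a) (hfa' : f₁' a = f₂' a) (x : ℝ) :
    HasDerivAt (fun y => if y ≤ a then f₁ y else f₂ y) (if x ≤ a then f₁' x else f₂' x) x := by
  have hIic : EqOn (fun y => if y ≤ a then f₁ y else f₂ y) f₁ (Iic a) :=
    fun y hy => if_pos hy
  have hIci : EqOn (fun y => if y ≤ a then f₁ y else f₂ y) f₂ (Ici a) := fun y hy => by
    rcases (mem_Ici.mp hy).eq_or_lt with rfl | hlt
    · simp [hfa]
    · simp [hlt.not_ge]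
  rcases lt_trichotomy x a with hlt | rfl | hgt
  · rw [if_pos hlt.le]
    exact (h₁ x).congr_of_eventuallyEq <| eventually_of_mem (Iio_mem_nhds hlt)
      fun y hy => hIic (mem_Iic.mpr (le_of_lt hy))
  · rw [if_pos le_rfl]
    have hL := (h₁ x).hasDerivWithinAt.congr hIic (hIic self_mem_Iic)
    have hR := (h₂ x).hasDerivWithinAt.congr hIci (hIci self_mem_Ici)
    rw [← hfa'] at hR
    simpa only [Iic_union_Ici, hasDerivWithinAt_univ] using hL.union hR
  · rw [if_neg hgt.not_ge]
    exact (h₂ x).congr_of_eventuallyEq <| eventually_of_mem (Ioi_mem_nhds hgt)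
      fun y hy => hIci (mem_Ici.mpr (le_of_lt hy))

theorem contDiff_one_ite_le (h₁ : ∀ x, HasDerivAt f₁ (f₁' x) x)
    (h₂ : ∀ x, HasDerivAt f₂ (f₂' x) x) (hfa : f₁ a = f₂ a) (hfa' : f₁' a = f₂' a)
    (hc₁ : Continuous f₁') (hc₂ : Continuous f₂') :
    ContDiff ℝ 1 (fun y => if y ≤ a then f₁ y else f₂ y) := by
  have hd := hasDerivAt_ite_le h₁ h₂ hfa hfa'
  rw [contDiff_one_iff_deriv]
  refine ⟨fun x => (hd x).differentiableAt, ?_⟩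
  rw [funext fun x => (hd x).deriv]
  exact hc₁.if_le hc₂ continuous_id continuous_const fun x hx => hx ▸ hfa'

theorem deriv_ite_le_of_lt {x : ℝ} (hx : a < x) :
    deriv (fun y => if y ≤ a then f₁ y else f₂ y) x = deriv f₂ x :=
  Filter.EventuallyEq.deriv_eq <| eventually_of_mem (Ioi_mem_nhds hx)
    fun _ hy => if_neg (not_le.mpr hy)

end Gluing

section OuterPiece

variable (M c lam A' : ℝ)

theorem hasDerivAt_outerPiece (x : ℝ) :
    HasDerivAt (fun x => (M - x) / (1 + c) + A' * (exp (-lam * x) - exp (-lam * M)))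
      (-1 / (1 + c) - A' * lam * exp (-lam * x)) x := by
  have hexp : HasDerivAt (fun x => exp (-lam * x)) (exp (-lam * x) * -lam) x :=
    (hasDerivAt_id' x).const_mul (-lam) |>.exp |>.congr_deriv (by ring)
  exact (((hasDerivAt_id' x).const_sub M).div_const (1 + c)).add
    ((hexp.sub_const (exp (-lam * M))).const_mul A') |>.congr_deriv (by ring)

theorem hasDerivAt_outerPiece_deriv (x : ℝ) :
    HasDerivAt (fun x => -1 / (1 + c) - A' * lam * exp (-lam * x))
      (A' * lam ^ 2 * exp (-lam * x)) x :=
  (((hasDerivAt_id' x).const_mul (-lam)).exp.const_mul (A' * lam)).const_sub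
    (-1 / (1 + c)) |>.congr_deriv (by ring)

theorem outerPiece_ode {s : ℝ} (hs : s ≠ 0) (hc : 1 + c ≠ 0) (hlam : lam = 2 * (1 + c) / s)
    (x : ℝ) :
    (1 + c) * (-1 / (1 + c) - A' * lam * exp (-lam * x)) +
      s / 2 * (A' * lam ^ 2 * exp (-lam * x)) + 1 = 0 := by
  subst hlam
  field_simp
  ring

theorem outerPiece_slope {s ε : ℝ} (hs : s ≠ 0) (hc : 1 + c ≠ 0) (hlam : lam = 2 * (1 + c) / s)
    (hA' : A' = s * c * exp (lam * ε) / (2 * (1 + c) ^ 2)) :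
    -1 / (1 + c) - A' * lam * exp (-lam * ε) = -1 := by
  have hslam : s * lam = 2 * (1 + c) := by rw [hlam]; field_simp
  rw [hA', neg_mul, exp_neg]
  field_simp
  linear_combination (-c) * hslam

end OuterPiece

theorem stmt_15_general (M α c ε lam A' D : ℝ) (g : ℝ → ℝ)
    (hc : 0 < c)
    (hε : ε ∈ Set.Ioo (0 : ℝ) M)
    (hlam : lam = 2 * (1 + c) / c ^ (2 * α : ℝ))
    (hA' : A' = c ^ (2 * α + 1 : ℝ) * Real.exp (lam * ε) / (2 * (1 + c) ^ 2))
    (hD : D = ε + (M - ε) / (1 + c) + A' * (Real.exp (-lam * ε) - Real.exp (-lam * M)))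
    (hgdef : ∀ x : ℝ, g x =
      if x ≤ ε then D - x
      else (M - x) / (1 + c) + A' * (Real.exp (-lam * x) - Real.exp (-lam * M))) :
    (D - ε = (M - ε) / (1 + c) + A' * (Real.exp (-lam * ε) - Real.exp (-lam * M))) ∧
    (deriv (fun x : ℝ => D - x) ε =
      deriv (fun x : ℝ => (M - x) / (1 + c) +
        A' * (Real.exp (-lam * x) - Real.exp (-lam * M))) ε) ∧
    ContDiffOn ℝ 1 g (Set.Icc 0 M) ∧
    g M = 0 ∧
    (∀ x ∈ Set.Ioo (0 : ℝ) ε, deriv g x + 1 = 0) ∧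
    (∀ x ∈ Set.Ioo ε M,
      (1 + c) * deriv g x + (c ^ (2 * α : ℝ) / 2) * deriv (deriv g) x + 1 = 0) := by
  have h1c : 1 + c ≠ 0 := by positivity
  have hs : c ^ (2 * α : ℝ) ≠ 0 := (rpow_pos_of_pos hc _).ne'
  have hjoin : D - ε = (M - ε) / (1 + c) + A' * (exp (-lam * ε) - exp (-lam * M)) := by
    rw [hD]; ring
  have hslope := outerPiece_slope c lam A' hs h1c hlam
    (by rw [hA', rpow_add hc, rpow_one])
  have hinner (x : ℝ) : HasDerivAt (fun x => D - x) (-1) x := (hasDerivAt_id' x).const_sub D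
  have hg : g = _ := funext hgdef
  have hg' := hasDerivAt_ite_le hinner (hasDerivAt_outerPiece M c lam A') hjoin hslope.symm
  refine ⟨hjoin, ?_, ?_, ?_, ?_, ?_⟩
  · rw [(hinner ε).deriv, (hasDerivAt_outerPiece M c lam A' ε).deriv, hslope]
  · rw [hg]
    exact (contDiff_one_ite_le hinner (hasDerivAt_outerPiece M c lam A') hjoin hslope.symm
      (by fun_prop) (by fun_prop)).contDiffOn
  · simp [hgdef, hε.2.not_ge]
  · intro x hx
    rw [hg, (hg' x).deriv, if_pos hx.2.le]
    ring
  · intro x hx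
    rw [hg, (hg' x).deriv, if_neg hx.1.not_ge, funext fun x => (hg' x).deriv,
      deriv_ite_le_of_lt hx.1, (hasDerivAt_outerPiece_deriv c lam A' x).deriv]
    exact outerPiece_ode c lam A' hs h1c hlam x

/-- For `M > 0`, `α ∈ (0, 1/2)`, `c > 0`, `ε ∈ (0, M)`, with
`λ = 2(1+c)/c^(2α)`, `A' = c^(2α+1) e^(λε)/(2(1+c)²)`, and
`D = ε + (M−ε)/(1+c) + A'(e^(−λε) − e^(−λM))`, the function `g` equal to `D − x` on
`[0, ε]` and to `(M−x)/(1+c) + A'(e^(−λx) − e^(−λM))` on `[ε, M]` is continuously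
differentiable on `[0, M]` (the two pieces and their first derivatives agree at `ε`),
`g(M) = 0`, `g'(x) + 1 = 0` on `(0, ε)`, and
`(1+c) g'(x) + (c^(2α)/2) g''(x) + 1 = 0` on `(ε, M)`. -/
theorem stmt_15 (M α c ε lam A' D : ℝ) (g : ℝ → ℝ)
    (hM : 0 < M) (hα : α ∈ Set.Ioo (0 : ℝ) (1 / 2)) (hc : 0 < c)
    (hε : ε ∈ Set.Ioo (0 : ℝ) M)
    (hlam : lam = 2 * (1 + c) / c ^ (2 * α : ℝ))
    (hA' : A' = c ^ (2 * α + 1 : ℝ) * Real.exp (lam * ε) / (2 * (1 + c) ^ 2))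
    (hD : D = ε + (M - ε) / (1 + c) + A' * (Real.exp (-lam * ε) - Real.exp (-lam * M)))
    (hgdef : ∀ x : ℝ, g x =
      if x ≤ ε then D - x
      else (M - x) / (1 + c) + A' * (Real.exp (-lam * x) - Real.exp (-lam * M))) :
    (D - ε = (M - ε) / (1 + c) + A' * (Real.exp (-lam * ε) - Real.exp (-lam * M))) ∧
    (deriv (fun x : ℝ => D - x) ε =
      deriv (fun x : ℝ => (M - x) / (1 + c) +
        A' * (Real.exp (-lam * x) - Real.exp (-lam * M))) ε) ∧
    ContDiffOn ℝ 1 g (Set.Icc 0 M) ∧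
    g M = 0 ∧
    (∀ x ∈ Set.Ioo (0 : ℝ) ε, deriv g x + 1 = 0) ∧
    (∀ x ∈ Set.Ioo ε M,
      (1 + c) * deriv g x + (c ^ (2 * α : ℝ) / 2) * deriv (deriv g) x + 1 = 0) :=
  stmt_15_general M α c ε lam A' D g hc hε hlam hA' hD hgdef
end

section
/- Fix M > 0 and α ∈ (0, 1/2). For c > 0 put ε(c) = 1/(1+c), λ(c) = 2(1+c)/c^{2α}, A'(c) = c^{2α+1}·e^{λ(c)ε(c)}/(2(1+c)²), and D(c) = ε(c) + (M−ε(c))/(1+c) + A'(c)·(e^{−λ(c)ε(c)} − e^{−λ(c)M}). Then A'(c) → 0 and D(c) → 0 as c → ∞. (D(c) is the expected time to reach M from 0 under the strategy f = 0 on [0, ε(c)], f = c on (ε(c), M]; hence the optimal expected retirement time is 0 when α < 1/2.) -/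
/-!
Since `λ(c) ε(c) = 2 c^(-2α) → 0`, both exponentials `e^(±λ(c) ε(c))` tend to `1`, so
`A'(c)` behaves like `c^(2α+1) / (2 (1+c)²) ≤ c^(2α-1) / 2 → 0` because `α < 1/2`.
On the other hand `λ(c) ≥ 2 c^(1-2α) → ∞`, so `e^(-λ(c) M) → 0`, and every summand of `D(c)`
vanishes.
-/

open Real Filter Topology

lemma tendsto_rpow_div_one_add_sq_atTop {p : ℝ} (hp : p < 2) :
    Tendsto (fun c : ℝ => c ^ p / (1 + c) ^ 2) atTop (𝓝 0) := by
  have hlim : Tendsto (fun c : ℝ => c ^ (-(2 - p))) atTop (𝓝 0) :=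
    tendsto_rpow_neg_atTop (by linarith)
  refine tendsto_of_tendsto_of_tendsto_of_le_of_le' tendsto_const_nhds hlim ?_ ?_
  · filter_upwards [eventually_ge_atTop 0] with c hc
    positivity
  · filter_upwards [eventually_gt_atTop 0] with c hc
    calc c ^ p / (1 + c) ^ 2 ≤ c ^ p / c ^ (2 : ℝ) := by
          rw [rpow_two]
          gcongr; linarith
      _ = c ^ (-(2 - p)) := by rw [← rpow_sub hc]; ring_nf

lemma tendsto_mul_one_add_div_rpow_mul_inv_one_add (a : ℝ) {s : ℝ} (hs : 0 < s) :
    Tendsto (fun c : ℝ => a * (1 + c) / c ^ s * (1 / (1 + c))) atTop (𝓝 0) := by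
  have hlim : Tendsto (fun c : ℝ => a * c ^ (-s)) atTop (𝓝 0) := by
    simpa using (tendsto_rpow_neg_atTop hs).const_mul a
  refine hlim.congr' ?_
  filter_upwards [eventually_gt_atTop 0] with c hc
  have hc' : 1 + c ≠ 0 := by linarith
  rw [rpow_neg hc.le]
  field_simp

lemma tendsto_mul_one_add_div_rpow_atTop {a s : ℝ} (ha : 0 < a) (hs : s < 1) :
    Tendsto (fun c : ℝ => a * (1 + c) / c ^ s) atTop atTop := by
  refine tendsto_atTop_mono' _ ?_ ((tendsto_rpow_atTop (sub_pos.2 hs)).const_mul_atTop ha)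
  filter_upwards [eventually_gt_atTop 0] with c hc
  calc a * c ^ (1 - s) = a * c / c ^ s := by rw [rpow_sub hc, rpow_one, mul_div_assoc]
    _ ≤ a * (1 + c) / c ^ s := by gcongr; linarith

/-- For `M > 0` and `α ∈ (0, 1/2)`, with `ε(c) = 1/(1+c)`, `λ(c) = 2(1+c)/c^(2α)`,
`A'(c) = c^(2α+1) e^(λ(c)ε(c)) / (2(1+c)²)` and
`D(c) = ε(c) + (M−ε(c))/(1+c) + A'(c)(e^(−λ(c)ε(c)) − e^(−λ(c)M))`, one has
`A'(c) → 0` and `D(c) → 0` as `c → ∞`. -/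
theorem stmt_16 (M α : ℝ) (hM : 0 < M) (hα : α ∈ Set.Ioo (0 : ℝ) (1 / 2))
    (ε lam A' D : ℝ → ℝ)
    (hε : ∀ c : ℝ, ε c = 1 / (1 + c))
    (hlam : ∀ c : ℝ, lam c = 2 * (1 + c) / c ^ (2 * α : ℝ))
    (hA' : ∀ c : ℝ, A' c = c ^ (2 * α + 1 : ℝ) * Real.exp (lam c * ε c) / (2 * (1 + c) ^ 2))
    (hD : ∀ c : ℝ, D c = ε c + (M - ε c) / (1 + c) +
      A' c * (Real.exp (-lam c * ε c) - Real.exp (-lam c * M))) :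
    Tendsto A' atTop (nhds 0) ∧ Tendsto D atTop (nhds 0) := by
  obtain ⟨hα0, hα2⟩ := hα
  have h1c : Tendsto (fun c : ℝ => 1 + c) atTop atTop :=
    tendsto_atTop_add_const_left _ 1 tendsto_id
  have hε0 : Tendsto ε atTop (𝓝 0) := by
    simpa only [funext hε, one_div, Function.comp_def] using tendsto_inv_atTop_zero.comp h1c
  have hlamε : Tendsto (fun c => lam c * ε c) atTop (𝓝 0) := by
    simpa only [hlam, hε] using tendsto_mul_one_add_div_rpow_mul_inv_one_add 2 (by linarith)
  have hlamM : Tendsto (fun c => lam c * M) atTop atTop := by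
    simpa only [hlam] using
      (tendsto_mul_one_add_div_rpow_atTop two_pos (by linarith)).atTop_mul_const hM
  have hA'0 : Tendsto A' atTop (𝓝 0) := by
    have hlim := ((tendsto_rpow_div_one_add_sq_atTop (p := 2 * α + 1) (by linarith)).mul
      ((continuous_exp.tendsto 0).comp hlamε)).div_const 2
    rw [exp_zero, zero_mul, zero_div] at hlim
    exact hlim.congr fun c => by simp only [hA', Function.comp_apply]; field_simp
  refine ⟨hA'0, ?_⟩
  have hexpε : Tendsto (fun c => exp (-lam c * ε c)) atTop (𝓝 1) := by
    simpa only [neg_mul, neg_zero, exp_zero, Function.comp_def] using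
      (continuous_exp.tendsto _).comp hlamε.neg
  have hexpM : Tendsto (fun c => exp (-lam c * M)) atTop (𝓝 0) := by
    simpa only [neg_mul, Function.comp_def] using
      tendsto_exp_atBot.comp (tendsto_neg_atTop_atBot.comp hlamM)
  have hlim := (hε0.add (((tendsto_const_nhds (x := M)).sub hε0).div_atTop h1c)).add
    (hA'0.mul (hexpε.sub hexpM))
  rw [add_zero, zero_mul, add_zero] at hlim
  exact hlim.congr fun c => (hD c).symm
end

section
/- Fix 0 ≤ x ≤ M. Then A²·∫_{x/A²}^{M/A²} g(u) du → M − x as A → ∞, where g is the function from the α = 1, A = 1 model. (Equivalently, the optimal expected retirement time V(x; A; α = 1) = A²·V(x/A²; A = 1; M/A²) converges to the no-investment value M − x as the volatility parameter A tends to infinity.) -/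
/-!
On `[0, ∞)` the function `g` takes values in `(0, 1]`, is antitone (because `y ↦ 1/y + log y`
is strictly decreasing on `(0, 1]`), and satisfies `1 - √(2u) ≤ g u`: writing `t = √y`, the
bound `log t ≥ 1 - 1/t` turns the defining equation into `(1/t - 1)² ≤ u/2`. Hence on
`[x/A², M/A²]` the integrand is within `√(2M)/A` of `1`, and
`|A² ∫_{x/A²}^{M/A²} g - (M - x)| ≤ (M - x) √(2M) / A → 0`.
-/

open Real Filter MeasureTheory intervalIntegral

lemma strictAntiOn_one_div_add_log : StrictAntiOn (fun y : ℝ => 1 / y + log y) (Set.Ioc 0 1) := by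
  rintro a ⟨ha, -⟩ b ⟨hb, hb1⟩ hab
  have hlog : log (b / a) < b / a - 1 :=
    log_lt_sub_one_of_pos (div_pos hb ha) (by rw [Ne, div_eq_one_iff_eq ha.ne']; exact hab.ne')
  have hgap : b / a - 1 ≤ 1 / a - 1 / b := by
    have hdiff : 1 / a - 1 / b - (b / a - 1) = (b - a) * (1 - b) / (a * b) := by
      field_simp
    have : 0 ≤ (b - a) * (1 - b) / (a * b) := by
      apply div_nonneg (mul_nonneg _ _) (mul_pos ha hb).le <;> linarith
    linarith
  simp only [log_div hb.ne' ha.ne'] at hlog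
  linarith

lemma one_sub_sqrt_two_mul_le {y u : ℝ} (hy : 0 < y) (h : 1 / y + log y = 1 + u / 2) :
    1 - √(2 * u) ≤ y := by
  set t := √y
  have ht0 : 0 < t := sqrt_pos.mpr hy
  have hty : t ^ 2 = y := sq_sqrt hy.le
  have hlog : 2 * (1 - 1 / t) ≤ log y := by
    rw [← hty, log_pow, one_div]
    push_cast
    gcongr
    exact one_sub_inv_le_log_of_pos ht0
  have hsq : (1 / t - 1) ^ 2 ≤ u / 2 := by
    have : 1 / y = (1 / t) ^ 2 := by rw [← hty, one_div_pow]
    nlinarith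
  have hr : 1 / t - 1 ≤ √(u / 2) := le_sqrt_of_sq_le hsq
  have hr2 : 2 * √(u / 2) = √(2 * u) := by
    rw [show 2 * u = 2 ^ 2 * (u / 2) by ring, sqrt_mul (by positivity), sqrt_sq two_pos.le]
  have h1 : 1 ≤ t * (1 + √(u / 2)) := by
    rw [div_sub_one ht0.ne', div_le_iff₀ ht0] at hr
    linarith
  set r := √(u / 2)
  have hr0 : 0 ≤ r := sqrt_nonneg _
  rw [← hty, ← hr2]
  rcases le_or_gt (1 - 2 * r) 0 with hneg | hpos
  · nlinarith
  · have h2 : 1 ≤ t ^ 2 * (1 + r) ^ 2 := by nlinarith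
    have h3 : 0 ≤ t ^ 2 * (3 * r ^ 2 + 2 * r ^ 3) := by positivity
    nlinarith [mul_le_mul_of_nonneg_left h2 hpos.le]

lemma antitoneOn_of_one_div_add_log_eq {g : ℝ → ℝ}
    (hg : ∀ u : ℝ, 0 ≤ u →
      g u ∈ Set.Ioc (0 : ℝ) 1 ∧ 1 / g u + log (g u) = 1 + u / 2) :
    AntitoneOn g (Set.Ici 0) := by
  intro u hu v hv huv
  rw [← strictAntiOn_one_div_add_log.le_iff_ge (hg u hu).1 (hg v hv).1, (hg u hu).2, (hg v hv).2]
  linarith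

lemma abs_integral_sub_le_of_one_div_add_log_eq {g : ℝ → ℝ}
    (hg : ∀ u : ℝ, 0 ≤ u →
      g u ∈ Set.Ioc (0 : ℝ) 1 ∧ 1 / g u + log (g u) = 1 + u / 2)
    {a b : ℝ} (ha : 0 ≤ a) (hab : a ≤ b) :
    |(∫ u in a..b, g u) - (b - a)| ≤ (b - a) * √(2 * b) := by
  have hint : IntervalIntegrable g volume a b := by
    refine ((antitoneOn_of_one_div_add_log_eq hg).mono ?_).intervalIntegrable
    rw [Set.uIcc_of_le hab]
    exact fun u hu => ha.trans hu.1
  have hclose : ∀ u, 0 ≤ u → |g u - 1| ≤ √(2 * u) := fun u hu => by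
    obtain ⟨⟨hpos, hle⟩, heq⟩ := hg u hu
    rw [abs_of_nonpos (by linarith)]
    linarith [one_sub_sqrt_two_mul_le hpos heq]
  calc |(∫ u in a..b, g u) - (b - a)| = ‖∫ u in a..b, (g u - 1)‖ := by
        rw [integral_sub hint intervalIntegrable_const, norm_eq_abs]
        simp
    _ ≤ √(2 * b) * |b - a| := by
        refine norm_integral_le_of_norm_le_const fun u hu => ?_
        rw [Set.uIoc_of_le hab] at hu
        rw [norm_eq_abs]
        exact (hclose u (ha.trans hu.1.le)).trans (by gcongr; exact hu.2)
    _ = (b - a) * √(2 * b) := by rw [abs_of_nonneg (by linarith), mul_comm]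

/-- For fixed `0 ≤ x ≤ M`,
`A² ∫_{x/A²}^{M/A²} g(u) du → M − x` as `A → ∞`, where `g` is the function of the
`α = 1`, `A = 1` model; i.e. `V(x; A; α = 1) = A² V(x/A²; A = 1; M/A²) → M − x`. -/
theorem stmt_17 (g : ℝ → ℝ)
    (hg : ∀ u : ℝ, 0 ≤ u →
      g u ∈ Set.Ioc (0 : ℝ) 1 ∧ 1 / g u + Real.log (g u) = 1 + u / 2)
    (M x : ℝ) (hx : 0 ≤ x) (hxM : x ≤ M) :
    Tendsto (fun A : ℝ => A ^ 2 * ∫ u in (x / A ^ 2)..(M / A ^ 2), g u)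
      atTop (nhds (M - x)) := by
  rw [← tendsto_sub_nhds_zero_iff]
  have hbound : Tendsto (fun A : ℝ => (M - x) * √(2 * (M / A ^ 2))) atTop (nhds 0) := by
    have hMA : Tendsto (fun A : ℝ => M / A ^ 2) atTop (nhds 0) :=
      tendsto_const_nhds.div_atTop (tendsto_pow_atTop two_ne_zero)
    have hcont : Continuous fun t : ℝ => (M - x) * √(2 * t) := by fun_prop
    simpa only [Function.comp_def, mul_zero, sqrt_zero] using (hcont.tendsto 0).comp hMA
  refine squeeze_zero_norm' ?_ hbound
  filter_upwards [eventually_gt_atTop 0] with A hA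
  have hA2 : 0 < A ^ 2 := by positivity
  have hint := abs_integral_sub_le_of_one_div_add_log_eq hg
    (a := x / A ^ 2) (b := M / A ^ 2) (by positivity) (by gcongr)
  calc ‖A ^ 2 * (∫ u in (x / A ^ 2)..(M / A ^ 2), g u) - (M - x)‖
      = A ^ 2 * |(∫ u in (x / A ^ 2)..(M / A ^ 2), g u) - (M / A ^ 2 - x / A ^ 2)| := by
        rw [norm_eq_abs, ← abs_of_pos hA2, ← abs_mul, abs_of_pos hA2]
        congr 1
        field_simp
    _ ≤ A ^ 2 * ((M / A ^ 2 - x / A ^ 2) * √(2 * (M / A ^ 2))) := by gcongr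
    _ = (M - x) * √(2 * (M / A ^ 2)) := by field_simp
end
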